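/- Let $\mathcal{P}$ be an arrangement of hyperplanes in a Euclidean space $V$, each of the form $\{v : \alpha(v) = c_\alpha\}$ for some $\alpha \in R_0$ and constant $c_\alpha$. Let $\mathcal{P}_c \subset \mathcal{P}$ be a subcollection with nonempty common intersection, and let $C$ be a chamber (connected component of the complement) of $\mathcal{P}_c$. If $p \in V$ is antidominant and its distance to every wall $\ker \alpha$ exceeds a constant depending on the shifts $c_\alpha$, then there exists $w \in W_0$ with $wp \in C$. -/

import Mathlib

/-!
Pick a point `z` of the chamber `C` such that `y := z - x` lies on no root wall, where `x` is the
common point of the subarrangement. The function `w ↦ ρ_y (w p)`, with `ρ_y` the sum of the roots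
positive on `y`, takes finitely many values on `W₀`. At a maximiser `w` no root `β` positive on `y`
has `β (w p) < 0`, since `s_β w` would give the larger value `ρ_y (w p) - β (w p) ρ_y (β^∨)`, as
`ρ_y (β^∨) > 0`. So `w p` lies in the closed Weyl chamber of `y`. If moreover every `|α (w p)|`
exceeds `K ≥ |α x|`, then `w p - x` and `y = z - x` lie on the same side of every wall of the
subarrangement, so `w p` and `z` lie in a common convex subset of the complement of the
subarrangement, hence in the same chamber `C`.
-/

open Module Finset
open scoped Classical

/-- A reduced integral root system in the dual of a Euclidean space `V`
(not necessarily spanning `V^*`). -/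
structure RedRootSystem (V : Type*) [NormedAddCommGroup V] [InnerProductSpace ℝ V]
    [FiniteDimensional ℝ V] where
  roots : Finset (Module.Dual ℝ V)
  nonzero : ∀ α ∈ roots, α ≠ 0
  coroot : Module.Dual ℝ V → V
  root_coroot_two : ∀ α ∈ roots, α (coroot α) = 2
  reflect_mem : ∀ α ∈ roots, ∀ β ∈ roots, β - β (coroot α) • α ∈ roots
  reduced : ∀ α ∈ roots, ∀ c : ℝ, c • α ∈ roots → c = 1 ∨ c = -1
  integral : ∀ α ∈ roots, ∀ β ∈ roots, ∃ n : ℤ, β (coroot α) = n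

namespace RedRootSystem

variable {V : Type*} [NormedAddCommGroup V] [InnerProductSpace ℝ V] [FiniteDimensional ℝ V]
variable (S : RedRootSystem V)

/-- The Weyl group `W₀`, generated by the reflections in the roots. -/
noncomputable def weylGroup : Subgroup (V ≃ₗ[ℝ] V) :=
  Subgroup.closure {w | ∃ α ∈ S.roots, ∃ h : α (S.coroot α) = 2, w = Module.reflection h}

/-- `W₀`-invariance of the parameter function `k`. -/
def kInvariant (k : Module.Dual ℝ V → ℝ) : Prop :=
  ∀ w ∈ S.weylGroup, ∀ α ∈ S.roots,
    (α ∘ₗ (w : V ≃ₗ[ℝ] V).toLinearMap) ∈ S.roots ∧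
      k (α ∘ₗ (w : V ≃ₗ[ℝ] V).toLinearMap) = k α

/-- `o(v) = #{α : α(v) = k_α} - #{α : α(v) = 0} - dim V`. -/
noncomputable def o (k : Module.Dual ℝ V → ℝ) (v : V) : ℤ :=
  ((S.roots.filter fun α => α v = k α).card : ℤ)
    - ((S.roots.filter fun α => α v = 0).card : ℤ) - (finrank ℝ V : ℤ)

/-- `i_L = #{α : α|_L ≡ k_α} - #{α : α|_L ≡ 0}` for an affine subspace `L`. -/
noncomputable def iA (k : Module.Dual ℝ V → ℝ) (L : AffineSubspace ℝ V) : ℤ :=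
  ((S.roots.filter fun α => ∀ x ∈ L, α x = k α).card : ℤ)
    - ((S.roots.filter fun α => ∀ x ∈ L, α x = 0).card : ℤ)

/-- `o_L = i_L - codim L` for an affine subspace `L`. -/
noncomputable def oA (k : Module.Dual ℝ V → ℝ) (L : AffineSubspace ℝ V) : ℤ :=
  S.iA k L - ((finrank ℝ V : ℤ) - (finrank ℝ L.direction : ℤ))

end RedRootSystem

lemma dense_setOf_apply_ne {V : Type*} [NormedAddCommGroup V] [NormedSpace ℝ V]
    [FiniteDimensional ℝ V] {f : Dual ℝ V} (hf : f ≠ 0) (t : ℝ) : Dense {v : V | f v ≠ t} :=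
  (dense_compl_singleton t).preimage
    (f.isOpenMap_of_finiteDimensional (LinearMap.surjective_of_ne_zero hf))

lemma dense_setOf_forall_apply_ne {V : Type*} [NormedAddCommGroup V] [NormedSpace ℝ V]
    [FiniteDimensional ℝ V] {s : Finset (Dual ℝ V)} (hs : ∀ f ∈ s, f ≠ 0) (x : V) :
    Dense {v : V | ∀ f ∈ s, f v ≠ f x} := by
  convert dense_biInter_of_isOpen
    (fun f _ => isOpen_ne_fun f.continuous_of_finiteDimensional continuous_const)
    s.countable_toSet (fun f hf => dense_setOf_apply_ne (hs f hf) (f x)) using 1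
  ext v
  simp

lemma isOpen_setOf_forall_apply_ne {V : Type*} [NormedAddCommGroup V] [NormedSpace ℝ V]
    [FiniteDimensional ℝ V] {ι : Type*} [Finite ι] (a : ι → Dual ℝ V) (c : ι → ℝ) :
    IsOpen {v : V | ∀ i, a i v ≠ c i} := by
  simpa only [Set.ofPred_forall] using isOpen_iInter_of_finite
    fun i => isOpen_ne_fun (a i).continuous_of_finiteDimensional continuous_const

lemma mem_connectedComponentIn_of_forall_mul_pos {V : Type*} [NormedAddCommGroup V]
    [NormedSpace ℝ V] {ι : Type*} (a : ι → Dual ℝ V) (c : ι → ℝ) {z v : V}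
    (h : ∀ i, 0 < (a i z - c i) * (a i v - c i)) :
    v ∈ connectedComponentIn {v : V | ∀ i, a i v ≠ c i} z := by
  set D := {u : V | ∀ i, 0 < (a i z - c i) * (a i u - c i)}
  have hD : Convex ℝ D := by
    simp only [D, Set.ofPred_forall]
    refine convex_iInter fun i => ?_
    have hlin : IsLinearMap ℝ fun u => (a i z - c i) * a i u :=
      ⟨fun u u' => by simp only [map_add]; ring, fun r u => by rw [map_smul, smul_eq_mul, smul_eq_mul]; ring⟩
    convert convex_halfSpace_gt hlin ((a i z - c i) * c i) using 1
    ext u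
    simp only [Set.mem_ofPred_eq]
    constructor <;> intro <;> nlinarith
  have hzD : z ∈ D := fun i => mul_self_pos.2 (left_ne_zero_of_mul (h i).ne')
  have hDU : D ⊆ {v : V | ∀ i, a i v ≠ c i} := fun u hu i hi => by
    simpa [hi] using (hu i).ne'
  exact hD.isPreconnected.subset_connectedComponentIn hzD hDU h

lemma mul_sub_pos_of_mul_nonneg {s t u : ℝ} (hst : 0 ≤ s * t) (hs : s ≠ 0) (hut : |u| < |t|) :
    0 < s * (t - u) := by
  rcases hs.lt_or_gt with hs | hs
  · have ht : t ≤ 0 := nonpos_of_mul_nonneg_right hst hs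
    rw [abs_of_nonpos ht] at hut
    exact mul_pos_of_neg_of_neg hs (by linarith [neg_abs_le u])
  · have ht : 0 ≤ t := nonneg_of_mul_nonneg_right hst hs
    rw [abs_of_nonneg ht] at hut
    exact mul_pos hs (by linarith [le_abs_self u])

namespace RedRootSystem

variable {V : Type*} [NormedAddCommGroup V] [InnerProductSpace ℝ V] [FiniteDimensional ℝ V]
variable (S : RedRootSystem V)

lemma neg_mem_roots {α : Dual ℝ V} (hα : α ∈ S.roots) : -α ∈ S.roots := by
  convert S.reflect_mem α hα α hα using 1
  rw [S.root_coroot_two α hα, two_smul, sub_add_cancel_left]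

lemma reflection_mem_weylGroup {α : Dual ℝ V} (hα : α ∈ S.roots) :
    Module.reflection (S.root_coroot_two α hα) ∈ S.weylGroup :=
  Subgroup.subset_closure ⟨α, hα, _, rfl⟩

lemma comp_reflection {α β : Dual ℝ V} (hβ : β ∈ S.roots) :
    α ∘ₗ (Module.reflection (S.root_coroot_two β hβ)).toLinearMap = α - α (S.coroot β) • β := by
  ext v
  simp [reflection_apply, mul_comm]

lemma comp_mem_roots {w : V ≃ₗ[ℝ] V} (hw : w ∈ S.weylGroup) {α : Dual ℝ V}
    (hα : α ∈ S.roots) : α ∘ₗ w.toLinearMap ∈ S.roots := by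
  induction hw using Subgroup.closure_induction'' generalizing α with
  | mem w hw =>
    obtain ⟨β, hβ, _, rfl⟩ := hw
    exact S.comp_reflection hβ ▸ S.reflect_mem β hβ α hα
  | inv_mem w hw =>
    obtain ⟨β, hβ, _, rfl⟩ := hw
    rw [reflection_inv, S.comp_reflection hβ]
    exact S.reflect_mem β hβ α hα
  | one => exact hα
  | mul w w' _ _ ihw ihw' => exact ihw' (ihw hα)

noncomputable def posRoots (y : V) : Finset (Dual ℝ V) :=
  S.roots.filter fun α => 0 < α y

/-- The reflection `s_β` permutes the roots and negates `α (β^∨)`; the roots positive on `y` that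
`s_β` keeps positive cancel in pairs, and those it makes negative (among them `β`) have
`α (β^∨) > 0`. -/
lemma sum_posRoots_apply_coroot_pos {y : V} (hy : ∀ γ ∈ S.roots, γ y ≠ 0) {β : Dual ℝ V}
    (hβ : β ∈ S.posRoots y) : 0 < ∑ α ∈ S.posRoots y, α (S.coroot β) := by
  obtain ⟨hβR, hβy⟩ := Finset.mem_filter.1 hβ
  set b := S.coroot β
  have hβb : β b = 2 := S.root_coroot_two β hβR
  set σ : Dual ℝ V → Dual ℝ V := fun α => α - α b • β
  have hσ_apply (α : Dual ℝ V) (v : V) : σ α v = α v - α b * β v := by simp [σ]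
  have hσb (α : Dual ℝ V) : σ α b = -α b := by rw [hσ_apply, hβb]; ring
  have hσσ (α : Dual ℝ V) : σ (σ α) = α := by ext v; rw [hσ_apply, hσ_apply, hσb]; ring
  have hσR {α} (hα : α ∈ S.roots) : σ α ∈ S.roots := S.reflect_mem β hβR α hα
  rw [← Finset.sum_filter_add_sum_filter_not _ (fun α => 0 < σ α y)]
  have hpairs : ∑ α ∈ (S.posRoots y).filter (fun α => 0 < σ α y), α b = 0 := by
    refine Finset.sum_involution (fun α _ => σ α) (fun α _ => by rw [hσb]; ring)
      (fun α _ hαb hfix => hαb ?_) (fun α hα => ?_) (fun α _ => hσσ α)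
    · simpa [σ, S.nonzero β hβR] using hfix
    · simp only [posRoots, Finset.mem_filter] at hα ⊢
      exact ⟨⟨hσR hα.1.1, hα.2⟩, by rw [hσσ]; exact hα.1.2⟩
  have hflipped : 0 < ∑ α ∈ (S.posRoots y).filter (fun α => ¬ 0 < σ α y), α b := by
    refine Finset.sum_pos (fun α hα => ?_) ⟨β, ?_⟩
    · simp only [posRoots, Finset.mem_filter, not_lt] at hα
      have hneg : σ α y < 0 := hα.2.lt_of_ne (hy _ (hσR hα.1.1))
      rw [hσ_apply] at hneg
      exact pos_of_mul_pos_left (by linarith [hα.1.2]) hβy.le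
    · simp only [Finset.mem_filter, hσ_apply, hβb, not_lt]
      exact ⟨hβ, by linarith⟩
  linarith

lemma finite_image_sum_apply {Q : Finset (Dual ℝ V)} (hQ : Q ⊆ S.roots) (p : V) :
    ((fun w : V ≃ₗ[ℝ] V => ∑ α ∈ Q, α (w p)) '' S.weylGroup).Finite := by
  have hvals : (Set.univ.pi fun _ : Q => (↑(S.roots.image fun γ => γ p) : Set ℝ)).Finite :=
    Set.Finite.pi fun _ => Finset.finite_toSet _
  refine (hvals.image fun f => ∑ α, f α).subset ?_
  rintro _ ⟨w, hw, rfl⟩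
  refine ⟨fun α => (α : Dual ℝ V) (w p), fun α _ => ?_, Finset.sum_coe_sort Q fun α => α (w p)⟩
  exact Finset.mem_coe.2 (Finset.mem_image.2 ⟨_, S.comp_mem_roots hw (hQ α.2), rfl⟩)

theorem exists_mem_weylGroup_forall_mul_nonneg {y : V} (hy : ∀ γ ∈ S.roots, γ y ≠ 0) (p : V) :
    ∃ w ∈ S.weylGroup, ∀ β ∈ S.roots, 0 ≤ β y * β (w p) := by
  set F := fun w : V ≃ₗ[ℝ] V => ∑ α ∈ S.posRoots y, α (w p)
  obtain ⟨_, ⟨w, hw, rfl⟩, hmax⟩ := Set.exists_max_image _ id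
    (S.finite_image_sum_apply (Finset.filter_subset _ _) p) ⟨F 1, 1, one_mem _, rfl⟩
  have hdom : ∀ β ∈ S.posRoots y, 0 ≤ β (w p) := by
    intro β hβ
    by_contra! hneg
    have hβR := (Finset.mem_filter.1 hβ).1
    have hreflect : F (Module.reflection (S.root_coroot_two β hβR) * w)
        = F w - β (w p) * ∑ α ∈ S.posRoots y, α (S.coroot β) := by
      simp only [F, Finset.mul_sum, ← Finset.sum_sub_distrib, LinearEquiv.mul_apply,
        reflection_apply, map_sub, map_smul, smul_eq_mul]
    have hle : F (Module.reflection (S.root_coroot_two β hβR) * w) ≤ F w :=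
      hmax _ ⟨_, mul_mem (S.reflection_mem_weylGroup hβR) hw, rfl⟩
    rw [hreflect] at hle
    nlinarith [S.sum_posRoots_apply_coroot_pos hy hβ]
  refine ⟨w, hw, fun β hβ => ?_⟩
  rcases (hy β hβ).lt_or_gt with hβy | hβy
  · have := hdom (-β) (Finset.mem_filter.2 ⟨S.neg_mem_roots hβ, by simpa using hβy⟩)
    simp only [LinearMap.neg_apply, Left.nonneg_neg_iff] at this
    exact mul_nonneg_of_nonpos_of_nonpos hβy.le this
  · exact mul_nonneg hβy.le (hdom β (Finset.mem_filter.2 ⟨hβ, hβy⟩))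

lemma lt_abs_apply_of_forall_lt_neg {P : Finset (Dual ℝ V)}
    (hpos : ∀ α ∈ S.roots, α ∈ P ∨ -α ∈ P) {K : ℝ} {p : V} (hp : ∀ α ∈ P, α p < -K)
    {γ : Dual ℝ V} (hγ : γ ∈ S.roots) : K < |γ p| := by
  rcases hpos γ hγ with h | h
  · linarith [hp γ h, neg_abs_le (γ p)]
  · linarith [hp (-γ) h, LinearMap.neg_apply γ p, le_abs_self (γ p)]

end RedRootSystem

theorem weyl_elt_into_chamber_general {V : Type*} [NormedAddCommGroup V]
    [InnerProductSpace ℝ V] [FiniteDimensional ℝ V] (S : RedRootSystem V)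
    {ι : Type*} [Fintype ι] (a : ι → Module.Dual ℝ V) (c : ι → ℝ)
    (ha : ∀ i, a i ∈ S.roots)
    (hcentral : ∃ x : V, ∀ i, a i x = c i)
    (x₀ : V) (hx₀ : x₀ ∈ {v : V | ∀ i, a i v ≠ c i})
    (C : Set V) (hC : C = connectedComponentIn {v : V | ∀ i, a i v ≠ c i} x₀)
    (P : Finset (Module.Dual ℝ V))
    (hpos : ∀ α ∈ S.roots, α ∈ P ∨ -α ∈ P) :
    ∃ K : ℝ, ∀ p : V, (∀ α ∈ P, α p < -K) →
      ∃ w ∈ S.weylGroup, (w : V ≃ₗ[ℝ] V) p ∈ C := by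
  obtain ⟨x, hx⟩ := hcentral
  have hCopen : IsOpen C := hC ▸ (isOpen_setOf_forall_apply_ne a c).connectedComponentIn
  obtain ⟨z, hzreg, hzC⟩ := (dense_setOf_forall_apply_ne S.nonzero x).exists_mem_open hCopen
    ⟨x₀, hC ▸ mem_connectedComponentIn hx₀⟩
  have hyreg : ∀ γ ∈ S.roots, γ (z - x) ≠ 0 := fun γ hγ => by
    simpa [sub_eq_zero] using hzreg γ hγ
  refine ⟨∑ α ∈ S.roots, |α x|, fun p hp => ?_⟩
  obtain ⟨w, hw, hdom⟩ := S.exists_mem_weylGroup_forall_mul_nonneg hyreg p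
  refine ⟨w, hw, ?_⟩
  rw [hC, connectedComponentIn_eq (hC ▸ hzC)]
  refine mem_connectedComponentIn_of_forall_mul_pos a c fun i => ?_
  have hfar : |a i x| < |a i (w p)| := by
    calc |a i x| ≤ ∑ α ∈ S.roots, |α x| :=
          Finset.single_le_sum (f := fun α : Dual ℝ V => |α x|) (fun _ _ => abs_nonneg _) (ha i)
      _ < |(a i ∘ₗ w.toLinearMap) p| :=
          S.lt_abs_apply_of_forall_lt_neg hpos hp (S.comp_mem_roots hw (ha i))
  rw [← hx i, ← map_sub]
  exact mul_sub_pos_of_mul_nonneg (hdom _ (ha i)) (hyreg _ (ha i)) hfar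

/-- Given a central subarrangement of shifted root hyperplanes
and a chamber `C` of it, any point `p` (in particular any antidominant point)
whose distance to every root wall is sufficiently large (depending on the
shifts) can be mapped into `C` by some `w ∈ W₀`. -/
theorem weyl_elt_into_chamber {V : Type*} [NormedAddCommGroup V]
    [InnerProductSpace ℝ V] [FiniteDimensional ℝ V] (S : RedRootSystem V)
    {ι : Type*} [Fintype ι] (a : ι → Module.Dual ℝ V) (c : ι → ℝ)
    (ha : ∀ i, a i ∈ S.roots)
    (hcentral : ∃ x : V, ∀ i, a i x = c i)
    (x₀ : V) (hx₀ : x₀ ∈ {v : V | ∀ i, a i v ≠ c i})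
    (C : Set V) (hC : C = connectedComponentIn {v : V | ∀ i, a i v ≠ c i} x₀)
    (P : Finset (Module.Dual ℝ V)) (hP : P ⊆ S.roots)
    (hpos : ∀ α ∈ S.roots, α ∈ P ∨ -α ∈ P) :
    ∃ K : ℝ, ∀ p : V, (∀ α ∈ P, α p < -K) →
      ∃ w ∈ S.weylGroup, (w : V ≃ₗ[ℝ] V) p ∈ C :=
  weyl_elt_into_chamber_general S a c ha hcentral x₀ hx₀ C hC P hpos
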